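/- arXiv:0905.3091 — 5 statements merged into one kernel-verified Lean document; each statement's English description precedes it below -/
import Mathlib

section
/- Let μ, μ̂ ∈ ℝ and let r, r̂, r̄ > 0 satisfy |μ̂ - μ| ≤ r, r ≤ r̂, and r̂ ≤ r̄. Then |μ̂·𝟙{|μ̂| > 2r̂} - μ·𝟙{|μ| > r}| ≤ 3 r̄ · 𝟙{|μ| ≥ r}. -/
def hardThreshold {α : Type*} [AddGroup α] [LinearOrder α] (t x : α) : α :=
  if t < |x| then x else 0

theorem hardThreshold_of_abs_le {α : Type*} [AddGroup α] [LinearOrder α] {t x : α}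
    (h : |x| ≤ t) : hardThreshold t x = 0 :=
  if_neg h.not_gt

/-- If only one of `x`, `y` survives its threshold, it is small: it lies within `r` of the other,
which is below its own threshold. -/
theorem abs_hardThreshold_sub_hardThreshold_le {α : Type*} [Field α] [LinearOrder α]
    [IsStrictOrderedRing α] {s t x y r : α} (ht : 0 ≤ t) (h : |y - x| ≤ r) :
    |hardThreshold s y - hardThreshold t x| ≤ max s t + r := by
  have hyx : |y| ≤ |x| + r := by
    linarith [abs_sub_abs_le_abs_sub y x]
  have hxy : |x| ≤ |y| + r := by
    linarith [abs_sub_abs_le_abs_sub x y, abs_sub_comm x y]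
  have hmax : 0 ≤ max s t := ht.trans (le_max_right s t)
  unfold hardThreshold
  split_ifs with hy hx hx
  · linarith
  · rw [sub_zero]
    linarith [le_max_right s t, not_lt.mp hx]
  · rw [zero_sub, abs_neg]
    linarith [le_max_left s t, not_lt.mp hy]
  · rw [sub_zero, abs_zero]
    linarith [(abs_nonneg _).trans h]

theorem stmt_0_general (μ μhat r rhat rbar : ℝ)
    (h1 : |μhat - μ| ≤ r) (h2 : r ≤ rhat) (h3 : rhat ≤ rbar) :
    |(if 2 * rhat < |μhat| then μhat else 0) - (if r < |μ| then μ else 0)| ≤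
      3 * rbar * (if r ≤ |μ| then 1 else 0) := by
  have hr : 0 ≤ r := (abs_nonneg _).trans h1
  change |hardThreshold (2 * rhat) μhat - hardThreshold r μ| ≤ _
  by_cases hμ : r ≤ |μ|
  · rw [if_pos hμ, mul_one]
    calc _ ≤ max (2 * rhat) r + r := abs_hardThreshold_sub_hardThreshold_le hr h1
      _ ≤ 3 * rbar := by rw [max_eq_left (by linarith)]; linarith
  · -- a small `μ` makes `μhat` small too: `|μhat| ≤ |μ| + r < 2 * rhat`
    have hμhat : |μhat| ≤ 2 * rhat := by linarith [abs_sub_abs_le_abs_sub μhat μ]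
    rw [if_neg hμ, mul_zero, hardThreshold_of_abs_le hμhat,
      hardThreshold_of_abs_le (not_le.mp hμ).le, sub_zero, abs_zero]

theorem stmt_0 (μ μhat r rhat rbar : ℝ)
    (hr : 0 < r) (hrhat : 0 < rhat) (hrbar : 0 < rbar)
    (h1 : |μhat - μ| ≤ r) (h2 : r ≤ rhat) (h3 : rhat ≤ rbar) :
    |(if 2 * rhat < |μhat| then μhat else 0) - (if r < |μ| then μ else 0)| ≤
      3 * rbar * (if r ≤ |μ| then 1 else 0) :=
  stmt_0_general μ μhat r rhat rbar h1 h2 h3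
end

section
/- Let μ, μ̂ ∈ ℝ and let r, r̂, r̄ > 0 satisfy |μ̂ - μ| ≤ r, r ≤ r̂, and r̂ ≤ r̄. Then |sgn(μ̂)·(|μ̂| - 2r̂)₊ - μ·𝟙{|μ| > r}| ≤ 3 r̄ · 𝟙{|μ| ≥ r}, where (x)₊ = max(x,0) and sgn is the sign function. -/
theorem stmt_1 (μ μhat r rhat rbar : ℝ)
    (hr : 0 < r) (hrhat : 0 < rhat) (hrbar : 0 < rbar)
    (h1 : |μhat - μ| ≤ r) (h2 : r ≤ rhat) (h3 : rhat ≤ rbar) :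
    |Real.sign μhat * max (|μhat| - 2 * rhat) 0 - (if r < |μ| then μ else 0)| ≤
      3 * rbar * (if r ≤ |μ| then 1 else 0) := by
  have hμle : |μ| ≤ |μhat| + r := by
    have h := abs_sub_abs_le_abs_sub μ μhat
    rw [abs_sub_comm] at h
    linarith
  have hμhatle : |μhat| ≤ |μ| + r := by
    have h := abs_sub_abs_le_abs_sub μhat μ
    linarith
  by_cases hI : r ≤ |μ|
  · rw [if_pos hI, mul_one]
    by_cases hM : |μhat| ≤ 2 * rhat
    · have hmax : max (|μhat| - 2 * rhat) 0 = 0 := max_eq_right (by linarith)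
      rw [hmax, mul_zero]
      by_cases hT : r < |μ|
      · rw [if_pos hT, zero_sub, abs_neg]
        linarith
      · rw [if_neg hT, sub_zero, abs_zero]
        positivity
    · push_neg at hM
      have hmax : max (|μhat| - 2 * rhat) 0 = |μhat| - 2 * rhat :=
        max_eq_left (by linarith)
      rw [hmax]
      have hT : r < |μ| := by linarith
      rw [if_pos hT]
      have hab := abs_le.1 h1
      rcases lt_trichotomy μhat 0 with h | h | h
      · rw [Real.sign_of_neg h, abs_of_neg h, abs_le]
        constructor <;> nlinarith
      · exfalso; rw [h, abs_zero] at hM; linarith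
      · rw [Real.sign_of_pos h, abs_of_pos h, abs_le]
        constructor <;> nlinarith
  · push_neg at hI
    rw [if_neg (not_lt.2 hI.le), if_neg (not_le.2 hI), mul_zero]
    have hmax : max (|μhat| - 2 * rhat) 0 = 0 := max_eq_right (by linarith)
    rw [hmax, mul_zero, sub_zero, abs_zero]
end

section
/- Let μ, μ̂ ∈ ℝ and let r, r̂, r̄, r̃ > 0 satisfy |μ̂ - μ| ≤ r, r ≤ r̂, r̂ ≤ r̄, and r̄ ≤ r̃. Then |μ̂·𝟙{|μ̂| > r̂} - μ·𝟙{|μ| > 2r̄}| ≤ 3 r̃ · 𝟙{|μ̂| > r̂}. -/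
theorem stmt_3 (μ μhat r rhat rbar rtil : ℝ)
    (hr : 0 < r) (hrhat : 0 < rhat) (hrbar : 0 < rbar) (hrtil : 0 < rtil)
    (h1 : |μhat - μ| ≤ r) (h2 : r ≤ rhat) (h3 : rhat ≤ rbar) (h4 : rbar ≤ rtil) :
    |(if rhat < |μhat| then μhat else 0) - (if 2 * rbar < |μ| then μ else 0)| ≤
      3 * rtil * (if rhat < |μhat| then 1 else 0) := by
  by_cases hA : rhat < |μhat|
  · by_cases hB : 2 * rbar < |μ|
    · simp only [if_pos hA, if_pos hB, mul_one]
      calc |μhat - μ| ≤ r := h1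
        _ ≤ 3 * rtil := by nlinarith
    · simp only [if_pos hA, if_neg hB, sub_zero, mul_one]
      have : |μhat| ≤ |μ| + r := by
        have := abs_sub_abs_le_abs_sub μhat μ
        linarith
      linarith [not_lt.mp hB]
  · have hB : ¬ (2 * rbar < |μ|) := by
      have : |μ| ≤ |μhat| + r := by
        have := abs_sub_abs_le_abs_sub μ μhat
        have h1' : |μ - μhat| ≤ r := by rwa [abs_sub_comm]
        linarith
      push_neg
      linarith [not_lt.mp hA]
    simp [if_neg hA, if_neg hB]
end

section
/- Let μ, μ̂ ∈ ℝ and let r, r̂, r̄ > 0 satisfy |μ̂ - μ| ≤ r, r ≤ r̂, and r̂ ≤ r̄. Assume further that either μ = 0 or |μ| > 2r̄. Then |μ̂·𝟙{|μ̂| > r̂} - μ·𝟙{|μ| > 2r̄}| ≤ r·𝟙{|μ̂| > r̂}. -/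
theorem stmt_4 (μ μhat r rhat rbar : ℝ)
    (hr : 0 < r) (hrhat : 0 < rhat) (hrbar : 0 < rbar)
    (h1 : |μhat - μ| ≤ r) (h2 : r ≤ rhat) (h3 : rhat ≤ rbar)
    (hμ : μ = 0 ∨ 2 * rbar < |μ|) :
    |(if rhat < |μhat| then μhat else 0) - (if 2 * rbar < |μ| then μ else 0)| ≤
      r * (if rhat < |μhat| then 1 else 0) := by
  rcases hμ with h | h
  · subst h
    have h1' : |μhat| ≤ rhat := by
      simpa using h1.trans h2
    rw [if_neg (not_lt.mpr h1'), if_neg (by simp [abs_of_pos hrbar]; positivity)]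
    simp [not_lt.mpr h1']
  · have hlb : rhat < |μhat| := by
      have := abs_sub_abs_le_abs_sub μ μhat
      rw [abs_sub_comm] at this
      nlinarith
    rw [if_pos hlb, if_pos h]; rw [if_pos hlb, mul_one]
    exact h1
end

section
/- Let μ, μ̂ ∈ ℝ and r > 0. Then (μ̂·𝟙{|μ̂| > 2r} - μ·𝟙{|μ| > r})² ≤ 2(μ̂ - μ)²·𝟙{|μ| > r} + 4(μ² + (μ̂ - μ)²)·𝟙{|μ̂| > 2r, |μ| ≤ r} + 8r²·𝟙{|μ̂| ≤ 2r, |μ| > r}. Moreover on the event {|μ̂| > 2r, |μ| ≤ r} one has |μ̂ - μ| > r. -/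
theorem stmt_14 (μ μhat r : ℝ) (hr : 0 < r) :
    ((if 2 * r < |μhat| then μhat else 0) - (if r < |μ| then μ else 0)) ^ 2 ≤
        2 * (μhat - μ) ^ 2 * (if r < |μ| then 1 else 0) +
        4 * (μ ^ 2 + (μhat - μ) ^ 2) * (if 2 * r < |μhat| ∧ |μ| ≤ r then 1 else 0) +
        8 * r ^ 2 * (if |μhat| ≤ 2 * r ∧ r < |μ| then 1 else 0) ∧
      (2 * r < |μhat| → |μ| ≤ r → r < |μhat - μ|) := by
  have h3 := sq_abs μ
  have h4 := sq_abs μhat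
  constructor
  · by_cases hb : 2 * r < |μhat| <;> by_cases ha : r < |μ|
    · have e1 : (if 2 * r < |μhat| ∧ |μ| ≤ r then (1:ℝ) else 0) = 0 :=
        if_neg (fun h => absurd h.2 (not_le.mpr ha))
      have e2 : (if |μhat| ≤ 2 * r ∧ r < |μ| then (1:ℝ) else 0) = 0 :=
        if_neg (fun h => absurd h.1 (not_le.mpr hb))
      have e0 : (if r < |μ| then (1:ℝ) else 0) = 1 := if_pos ha
      rw [if_pos hb, if_pos ha, e0, e1, e2]
      nlinarith [sq_nonneg (μhat - μ)]
    · have e1 : (if 2 * r < |μhat| ∧ |μ| ≤ r then (1:ℝ) else 0) = 1 :=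
        if_pos ⟨hb, not_lt.mp ha⟩
      have e2 : (if |μhat| ≤ 2 * r ∧ r < |μ| then (1:ℝ) else 0) = 0 :=
        if_neg (fun h => absurd h.2 ha)
      have e0 : (if r < |μ| then (1:ℝ) else 0) = 0 := if_neg ha
      rw [if_pos hb, if_neg ha, e0, e1, e2]
      nlinarith [sq_nonneg (μhat - 2*μ)]
    · have e1 : (if 2 * r < |μhat| ∧ |μ| ≤ r then (1:ℝ) else 0) = 0 :=
        if_neg (fun h => absurd h.1 hb)
      have e2 : (if |μhat| ≤ 2 * r ∧ r < |μ| then (1:ℝ) else 0) = 1 :=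
        if_pos ⟨not_lt.mp hb, ha⟩
      have e0 : (if r < |μ| then (1:ℝ) else 0) = 1 := if_pos ha
      rw [if_neg hb, if_pos ha, e0, e1, e2]
      have h6 : |μhat| ≤ 2 * r := not_lt.mp hb
      nlinarith [sq_nonneg (2*μhat - μ), abs_nonneg μhat, h6, hr,
        mul_le_mul_of_nonneg_left h6 (abs_nonneg μhat)]
    · have e1 : (if 2 * r < |μhat| ∧ |μ| ≤ r then (1:ℝ) else 0) = 0 :=
        if_neg (fun h => absurd h.1 hb)
      have e2 : (if |μhat| ≤ 2 * r ∧ r < |μ| then (1:ℝ) else 0) = 0 :=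
        if_neg (fun h => absurd h.2 ha)
      have e0 : (if r < |μ| then (1:ℝ) else 0) = 0 := if_neg ha
      rw [if_neg hb, if_neg ha, e0, e1, e2]
      nlinarith [sq_nonneg (μhat - μ)]
  · intro hb ha
    have h := abs_sub_abs_le_abs_sub μhat μ
    have := le_abs_self (μhat - μ)
    linarith [abs_nonneg (μhat - μ), (le_abs_self (μhat - μ)), abs_abs (μhat - μ)]
end
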